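/- arXiv:1608.00617 — 3 statements merged into one kernel-verified Lean document; each statement's English description precedes it below -/
import Mathlib

section
/- Let n ≥ 2 and let A = {a₁, a₁⁻¹, …, aₙ, aₙ⁻¹} be the alphabet of the free group F(A) on n generators (so |A| = 2n ≥ 4). Let d₁, d₂ ∈ A be letters and let w be a nonempty reduced word over A. Then there exist letters b₁, b₂ ∈ A such that the word d₁ (b₁ w b₂)² d₂ (the concatenation d₁ b₁ w b₂ b₁ w b₂ d₂) is reduced. -/
/-- A letter of the alphabet `A = {a₁, a₁⁻¹, …, aₙ, aₙ⁻¹}`: a generator index together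
with a sign (exponent ±1). -/
abbrev Letter (n : ℕ) := Fin n × Bool

/-- The inverse letter. -/
def Letter.inv {n : ℕ} (x : Letter n) : Letter n := (x.1, !x.2)

/-- A word is reduced if it is nonempty and no letter is followed by its inverse. -/
def ReducedWord {n : ℕ} (w : List (Letter n)) : Prop :=
  w ≠ [] ∧ w.Chain' fun a b => b ≠ a.inv

/-! Each of the five junctions of the sandwich forbids one letter: `b₁` must avoid `d₁⁻¹` and the
inverse of the first letter of `w`, while `b₂` must avoid the inverse of the last letter of `w`,
`b₁⁻¹` and `d₂⁻¹`. Since `|A| = 2n ≥ 4`, both choices are possible. -/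

theorem exists_ne_ne_ne_of_three_lt_card {α : Type*} [Fintype α] (h : 3 < Fintype.card α)
    (x y z : α) : ∃ b, b ≠ x ∧ b ≠ y ∧ b ≠ z := by
  classical
  obtain ⟨b, -, hb⟩ := Finset.exists_mem_notMem_of_card_lt_card
    ((Finset.card_le_three (a := x) (b := y) (c := z)).trans_lt h)
  simp only [Finset.mem_insert, Finset.mem_singleton, not_or] at hb
  exact ⟨b, hb⟩

namespace Letter

lemma card_eq_two_mul (n : ℕ) : Fintype.card (Letter n) = 2 * n := by
  simp [mul_comm]

variable {n : ℕ}

lemma ne_inv_comm {a b : Letter n} : a ≠ b.inv ↔ b ≠ a.inv := by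
  simp only [inv, ne_eq, Prod.ext_iff]
  cases a.2 <;> cases b.2 <;> simp [eq_comm]

end Letter

lemma reducedWord_singleton {n : ℕ} (a : Letter n) : ReducedWord [a] :=
  ⟨List.cons_ne_nil a [], List.isChain_singleton a⟩

lemma ReducedWord.append {n : ℕ} {u v : List (Letter n)} {a b : Letter n} (hu : ReducedWord u)
    (hv : ReducedWord v) (ha : u.getLast? = some a) (hb : v.head? = some b) (h : b ≠ a.inv) :
    ReducedWord (u ++ v) := by
  refine ⟨by simp [hu.1], List.IsChain.append hu.2 hv.2 ?_⟩
  rintro x hx y hy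
  rw [ha, Option.mem_some_iff] at hx
  rw [hb, Option.mem_some_iff] at hy
  exact hx ▸ hy ▸ h

theorem exists_letters_reduced_sandwich
    (n : ℕ) (hn : 2 ≤ n)
    (d₁ d₂ : Letter n) (w : List (Letter n)) (hw : ReducedWord w) :
    ∃ b₁ b₂ : Letter n,
      ReducedWord ([d₁] ++ [b₁] ++ w ++ [b₂] ++ [b₁] ++ w ++ [b₂] ++ [d₂]) := by
  have hcard : 3 < Fintype.card (Letter n) := by rw [Letter.card_eq_two_mul]; omega
  have hh := List.head?_eq_some_head hw.1
  have hl := List.getLast?_eq_some_getLast hw.1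
  obtain ⟨b₁, hb₁d₁, hb₁w, -⟩ :=
    exists_ne_ne_ne_of_three_lt_card hcard d₁.inv (w.head hw.1).inv d₁.inv
  obtain ⟨b₂, hb₂w, hb₂b₁, hb₂d₂⟩ :=
    exists_ne_ne_ne_of_three_lt_card hcard (w.getLast hw.1).inv b₁.inv d₂.inv
  set m := [b₁] ++ w ++ [b₂]
  have hm : ReducedWord m :=
    ((reducedWord_singleton b₁).append hw rfl hh (Letter.ne_inv_comm.mp hb₁w)).append
      (reducedWord_singleton b₂) ((List.getLast?_append_of_ne_nil _ hw.1).trans hl) rfl hb₂w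
  have hm_head : m.head? = some b₁ := rfl
  have hm_last (u : List (Letter n)) : (u ++ m).getLast? = some b₂ :=
    (List.getLast?_append_of_ne_nil u hm.1).trans (List.getLast?_concat ..)
  refine ⟨b₁, b₂, ?_⟩
  have hsplit : [d₁] ++ [b₁] ++ w ++ [b₂] ++ [b₁] ++ w ++ [b₂] ++ [d₂] = [d₁] ++ m ++ m ++ [d₂] := by
    simp [m]
  rw [hsplit]
  exact (((reducedWord_singleton d₁).append hm rfl hm_head hb₁d₁).append hm (hm_last _) hm_head
    (Letter.ne_inv_comm.mp hb₂b₁)).append (reducedWord_singleton d₂) (hm_last _) rfl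
    (Letter.ne_inv_comm.mp hb₂d₂)
end

section
/- Let n ≥ 2 and let A = {a₁, a₁⁻¹, …, aₙ, aₙ⁻¹} (so |A| = 2n ≥ 4). Let w be a nonempty reduced word over A, let b₁, b₂, d₁, d₂ ∈ A be letters such that the word d₁ (b₁ w b₂)² d₂ is reduced, let c ∈ A be a letter with c ∉ {b₂, b₂⁻¹}, and set n_w = |w| + 1. Define z₄(w) = b₁ w b₂ c^{n_w+1} b₂ · b₁ w b₂ c^{n_w+2} b₂ · b₁ w b₂ c^{n_w+3} b₂ · b₁ w b₂ c^{n_w+4} b₂. Then z₄(w) is a reduced word, and for each i ∈ {1, 2, 3, 4}: the word (b₂ c^{n_w+i} b₂)⁻¹ = b₂⁻¹ c^{−(n_w+i)} b₂⁻¹ does not occur as a contiguous subword of z₄(w), and the word b₂ c^{n_w+i} b₂ occurs as a contiguous subword of z₄(w) in exactly one position, namely the standard one: as the suffix of length n_w + i + 2 of the i-th syllable b₁ w b₂ c^{n_w+i} b₂ of z₄(w). -/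
/-- The inverse of a word `c₁ … c_ℓ`, namely `c_ℓ⁻¹ … c₁⁻¹`. -/
def wordInv {n : ℕ} (w : List (Letter n)) : List (Letter n) :=
  (w.map Letter.inv).reverse

/-- The `i`-th syllable `b₁ w b₂ c^{n_w + i} b₂` of `z₄(w)`, where `n_w = |w| + 1`. -/
def syl {n : ℕ} (b₁ b₂ c : Letter n) (w : List (Letter n)) (i : ℕ) : List (Letter n) :=
  [b₁] ++ w ++ [b₂] ++ List.replicate (w.length + 1 + i) c ++ [b₂]

/-- The word `z₄(w) = b₁wb₂c^{n_w+1}b₂ · b₁wb₂c^{n_w+2}b₂ · b₁wb₂c^{n_w+3}b₂ · b₁wb₂c^{n_w+4}b₂`. -/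
def z4 {n : ℕ} (b₁ b₂ c : Letter n) (w : List (Letter n)) : List (Letter n) :=
  syl b₁ b₂ c w 1 ++ syl b₁ b₂ c w 2 ++ syl b₁ b₂ c w 3 ++ syl b₁ b₂ c w 4

/-- The word `b₂ c^{n_w + i} b₂`. -/
def uWord {n : ℕ} (b₂ c : Letter n) (w : List (Letter n)) (i : ℕ) : List (Letter n) :=
  [b₂] ++ List.replicate (w.length + 1 + i) c ++ [b₂]

/-- The prefix of `z₄(w)` preceding the standard occurrence of `b₂ c^{n_w+i} b₂`, i.e.
the first `i - 1` syllables followed by `b₁ w`; thus `preZ ++ uWord` consists of the first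
`i` syllables amd `uWord b₂ c w i` is the suffix of length `n_w + i + 2` of the
`i`-th syllable. -/
def preZ {n : ℕ} (b₁ b₂ c : Letter n) (w : List (Letter n)) (i : ℕ) : List (Letter n) :=
  (((List.range (i - 1)).map fun j => syl b₁ b₂ c w (j + 1)).flatten) ++ [b₁] ++ w

namespace Z4Aux

variable {n : ℕ} {α : Type*}

lemma get_at (x : List α) (b : α) (y : List α) {q : ℕ} (h : q = x.length) :
    (x ++ b :: y)[q]? = some b := by
  subst h
  rw [List.getElem?_append_right le_rfl]
  simp

lemma get_after (x : List α) (b : α) (y : List α) {q : ℕ} (h : x.length < q) :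
    (x ++ b :: y)[q]? = y[q - x.length - 1]? := by
  rw [List.getElem?_append_right (le_of_lt h)]
  have h2 : q - x.length = (q - x.length - 1) + 1 := by omega
  rw [h2]
  simp

lemma get_repl (L : ℕ) (c : α) (y : List α) {j : ℕ} (h : j < L) :
    (List.replicate L c ++ y)[j]? = some c := by
  rw [List.getElem?_append]
  simp [h]

/-- `blocks P b₂ c ks` is the concatenation of the blocks `P b₂ c^k b₂` for `k ∈ ks`. -/
def blocks (P : List (Letter n)) (b₂ c : Letter n) : List ℕ → List (Letter n)
  | [] => []
  | k :: ks => P ++ [b₂] ++ List.replicate k c ++ [b₂] ++ blocks P b₂ c ks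

lemma occ_unique (P : List (Letter n)) (b₂ c : Letter n) (m : ℕ)
    (hP : P.length = m) (hm : 1 ≤ m) (hcb : c ≠ b₂) :
    ∀ (ks : List ℕ) (L : ℕ), m + 1 ≤ L → ∀ Z' Z'' : List (Letter n),
      Z' ++ (b₂ :: (List.replicate L c ++ b₂ :: Z'')) = blocks P b₂ c ks →
      ∃ pre post, ks = pre ++ L :: post ∧ Z' = blocks P b₂ c pre ++ P ∧
        Z'' = blocks P b₂ c post := by
  intro ks
  induction ks with
  | nil =>
    intro L hL Z' Z'' hE
    exfalso
    have := congrArg List.length hE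
    simp [blocks] at this
  | cons k ks ih =>
    intro L hL Z' Z'' h
    set T := blocks P b₂ c ks with hT
    have hE : Z' ++ (b₂ :: (List.replicate L c ++ b₂ :: Z'')) =
        P ++ (b₂ :: (List.replicate k c ++ b₂ :: T)) := by
      simpa [blocks, List.append_assoc] using h
    rcases lt_trichotomy Z'.length m with hp | hp | hp
    · -- occurrence starts inside P : contradiction at index m
      exfalso
      have hq : (Z' ++ (b₂ :: (List.replicate L c ++ b₂ :: Z'')))[m]? =
          (P ++ (b₂ :: (List.replicate k c ++ b₂ :: T)))[m]? := by rw [hE]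
      rw [get_after _ _ _ hp, get_at _ _ _ hP.symm,
        get_repl _ _ _ (by omega : m - Z'.length - 1 < L)] at hq
      exact hcb (Option.some.inj hq)
    · -- occurrence starts exactly at the first b₂
      have hij := List.append_inj hE (by rw [hp, hP])
      obtain ⟨hZP, hcons⟩ := hij
      have hXY : List.replicate L c ++ b₂ :: Z'' = List.replicate k c ++ b₂ :: T := by
        injection hcons
      rcases lt_trichotomy L k with h' | h' | h'
      · exfalso
        have hq : (List.replicate L c ++ b₂ :: Z'')[L]? =
            (List.replicate k c ++ b₂ :: T)[L]? := by rw [hXY]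
        rw [get_at (List.replicate L c) b₂ Z'' (by simp), get_repl k c (b₂ :: T) h'] at hq
        exact hcb (Option.some.inj hq).symm
      · subst h'
        have h2 := List.append_inj hXY (by simp)
        have hZT : Z'' = T := by
          have := h2.2
          injection this
        exact ⟨[], ks, by simp, by simpa [blocks] using hZP, hZT⟩
      · exfalso
        have hq : (List.replicate L c ++ b₂ :: Z'')[k]? =
            (List.replicate k c ++ b₂ :: T)[k]? := by rw [hXY]
        rw [get_repl L c (b₂ :: Z'') h', get_at (List.replicate k c) b₂ T (by simp)] at hq
        exact hcb (Option.some.inj hq)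
    · -- occurrence starts after the first b₂
      by_cases hC : Z'.length ≤ m + k
      · -- starts inside the c-run : contradiction at index Z'.length
        exfalso
        have hq : (Z' ++ (b₂ :: (List.replicate L c ++ b₂ :: Z'')))[Z'.length]? =
            (P ++ (b₂ :: (List.replicate k c ++ b₂ :: T)))[Z'.length]? := by rw [hE]
        rw [get_at _ _ _ rfl, get_after _ _ _ (by omega : P.length < Z'.length),
          get_repl _ _ _ (by omega : Z'.length - P.length - 1 < k)] at hq
        exact hcb (Option.some.inj hq.symm)
      · by_cases hD : Z'.length = m + k + 1
        · -- starts at the closing b₂ of the block : contradiction in the tail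
          exfalso
          have hE2 : (Z' ++ [b₂]) ++ (List.replicate L c ++ b₂ :: Z'') =
              (P ++ (b₂ :: (List.replicate k c ++ [b₂]))) ++ T := by
            simpa [List.append_assoc] using hE
          have h2 := List.append_inj hE2 (by simp [hD, hP]; omega)
          have h3 : List.replicate L c ++ b₂ :: Z'' = T := h2.2
          cases ks with
          | nil => simp [blocks] at hT; rw [hT] at h3; simp at h3
          | cons k' ks' =>
            have h4 : List.replicate L c ++ b₂ :: Z'' =
                P ++ (b₂ :: (List.replicate k' c ++ b₂ :: blocks P b₂ c ks')) := by
              rw [h3, hT]; simp [blocks, List.append_assoc]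
            have hq : (List.replicate L c ++ b₂ :: Z'')[m]? =
                (P ++ (b₂ :: (List.replicate k' c ++ b₂ :: blocks P b₂ c ks')))[m]? := by
              rw [h4]
            rw [get_repl _ _ _ (by omega : m < L), get_at _ _ _ hP.symm] at hq
            exact hcb (Option.some.inj hq)
        · -- starts strictly after this block : recurse
          have hE2 : Z' ++ (b₂ :: (List.replicate L c ++ b₂ :: Z'')) =
              (P ++ (b₂ :: (List.replicate k c ++ [b₂]))) ++ T := by
            simpa [List.append_assoc] using hE
          rcases List.append_eq_append_iff.mp hE2 with ⟨a, hH, hR⟩ | ⟨d, hZ', hTd⟩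
          · exfalso
            have ha : a = [] := by
              have := congrArg List.length hH
              simp [hP] at this
              have : a.length = 0 := by omega
              exact List.length_eq_zero_iff.mp this
            subst ha
            obtain ⟨pre, post, hks, hpre, -⟩ :=
              ih L hL [] Z'' (by simpa using hR)
            have := congrArg List.length hpre
            simp [hP] at this
            omega
          · obtain ⟨pre, post, hks, hpre, hpost⟩ :=
              ih L hL d Z'' (by simpa [List.append_assoc] using hTd.symm)
            refine ⟨k :: pre, post, by simp [hks], ?_, hpost⟩
            rw [hZ', hpre]
            simp [blocks, List.append_assoc]

lemma no_run (P : List (Letter n)) (b₂ c c' : Letter n) (m : ℕ)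
    (hP : P.length = m) (h1 : c' ≠ b₂) (h2 : c' ≠ c) :
    ∀ (ks : List ℕ) (L : ℕ), m + 1 ≤ L → ∀ s t : List (Letter n),
      s ++ (List.replicate L c' ++ t) = blocks P b₂ c ks → False := by
  intro ks
  induction ks with
  | nil =>
    intro L hL s t hE
    have := congrArg List.length hE
    simp [blocks] at this
    omega
  | cons k ks ih =>
    intro L hL s t h
    set T := blocks P b₂ c ks with hT
    have hE : s ++ (List.replicate L c' ++ t) =
        P ++ (b₂ :: (List.replicate k c ++ b₂ :: T)) := by
      simpa [blocks, List.append_assoc] using h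
    by_cases hp1 : s.length ≤ m
    · -- run covers index m, where there is a b₂
      have hq : (s ++ (List.replicate L c' ++ t))[m]? =
          (P ++ (b₂ :: (List.replicate k c ++ b₂ :: T)))[m]? := by rw [hE]
      rw [List.getElem?_append_right hp1, get_repl _ _ _ (by omega : m - s.length < L),
        get_at _ _ _ hP.symm] at hq
      exact h1 (Option.some.inj hq)
    · by_cases hp2 : s.length ≤ m + k
      · -- run starts inside the c-run : c' = c
        have hq : (s ++ (List.replicate L c' ++ t))[s.length]? =
            (P ++ (b₂ :: (List.replicate k c ++ b₂ :: T)))[s.length]? := by rw [hE]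
        rw [List.getElem?_append_right le_rfl, get_repl _ _ _ (by omega : s.length - s.length < L),
          get_after _ _ _ (by omega : P.length < s.length),
          get_repl _ _ _ (by omega : s.length - P.length - 1 < k)] at hq
        exact h2 (Option.some.inj hq)
      · by_cases hp3 : s.length = m + k + 1
        · -- run starts at the closing b₂
          have hq : (s ++ (List.replicate L c' ++ t))[s.length]? =
              (P ++ (b₂ :: (List.replicate k c ++ b₂ :: T)))[s.length]? := by rw [hE]
          rw [List.getElem?_append_right le_rfl, get_repl _ _ _ (by omega : s.length - s.length < L),
            get_after _ _ _ (by omega : P.length < s.length)] at hq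
          have : s.length - P.length - 1 = k := by omega
          rw [this, get_at _ _ _ (by simp)] at hq
          exact h1 (Option.some.inj hq)
        · -- run starts after this block : recurse
          have hE2 : s ++ (List.replicate L c' ++ t) =
              (P ++ (b₂ :: (List.replicate k c ++ [b₂]))) ++ T := by
            simpa [List.append_assoc] using hE
          rcases List.append_eq_append_iff.mp hE2 with ⟨a, hH, hR⟩ | ⟨d, hs, hTd⟩
          · have ha : a = [] := by
              have := congrArg List.length hH
              simp [hP] at this
              have : a.length = 0 := by omega
              exact List.length_eq_zero_iff.mp this
            subst ha
            exact ih L hL [] t (by simpa using hR)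
          · exact ih L hL d t (by simpa [List.append_assoc] using hTd.symm)

lemma inv_ne (x : Letter n) : x ≠ x.inv := by
  intro hx
  have := congrArg Prod.snd hx
  simp [Letter.inv] at this

lemma inv_inv (x : Letter n) : x.inv.inv = x := by
  simp [Letter.inv]

lemma chain_replicate (c : Letter n) (hcc : c ≠ c.inv) :
    ∀ j, List.Chain' (fun a b : Letter n => b ≠ a.inv) (List.replicate j c) := by
  intro j
  induction j with
  | zero => exact List.isChain_nil
  | succ j ihj =>
    rw [List.replicate_succ]
    refine List.isChain_cons.mpr ⟨?_, ihj⟩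
    intro y hy
    cases j with
    | zero => simp at hy
    | succ j' =>
      rw [List.replicate_succ] at hy
      simp at hy
      subst hy
      exact hcc

lemma blocks_chain (b₁ b₂ c : Letter n) (w : List (Letter n))
    (hA : List.Chain' (fun a b : Letter n => b ≠ a.inv) ([b₁] ++ w ++ [b₂]))
    (hb₁ : b₁ ≠ b₂.inv) (hbc : c ≠ b₂.inv) (hcb : b₂ ≠ c.inv) :
    ∀ ks : List ℕ, List.Chain' (fun a b : Letter n => b ≠ a.inv)
      (blocks ([b₁] ++ w) b₂ c ks) := by
  intro ks
  induction ks with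
  | nil => exact List.isChain_nil
  | cons k ks ih =>
    have hrw : blocks ([b₁] ++ w) b₂ c (k :: ks) =
        ([b₁] ++ w ++ [b₂]) ++ (List.replicate k c ++ ([b₂] ++ blocks ([b₁] ++ w) b₂ c ks)) := by
      simp [blocks, List.append_assoc]
    rw [hrw, List.Chain', List.isChain_append]
    refine ⟨hA, ?_, ?_⟩
    · rw [List.isChain_append]
      refine ⟨chain_replicate c (inv_ne c) k, ?_, ?_⟩
      · rw [List.isChain_append]
        refine ⟨by simp, ih, ?_⟩
        intro x hx y hy
        simp at hx
        subst hx
        cases ks with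
        | nil => simp [blocks] at hy
        | cons k' ks' =>
          have : (blocks ([b₁] ++ w) b₂ c (k' :: ks')).head? = some b₁ := by
            simp [blocks]
          rw [this] at hy
          simp at hy
          subst hy
          exact hb₁
      · intro x hx y hy
        simp at hy
        subst hy
        cases k with
        | zero => simp at hx
        | succ k' =>
          rw [List.replicate_succ'] at hx
          simp at hx
          subst hx
          exact hcb
    · intro x hx y hy
      have hlast : ([b₁] ++ w ++ [b₂]).getLast? = some b₂ := List.getLast?_concat
      rw [hlast] at hx
      have hx' : x = b₂ := by simpa using hx.symm
      subst hx'
      cases k with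
      | zero =>
        simp at hy
        subst hy
        exact inv_ne _
      | succ k' =>
        rw [List.replicate_succ] at hy
        simp at hy
        subst hy
        exact hbc

end Z4Aux

open Z4Aux in
theorem z4_reduced_and_unique_standard_occurrences
    (n : ℕ) (hn : 2 ≤ n)
    (w : List (Letter n)) (hw : ReducedWord w)
    (b₁ b₂ d₁ d₂ c : Letter n)
    (hred : ReducedWord ([d₁] ++ [b₁] ++ w ++ [b₂] ++ [b₁] ++ w ++ [b₂] ++ [d₂]))
    (hc₁ : c ≠ b₂) (hc₂ : c ≠ b₂.inv) :
    ReducedWord (z4 b₁ b₂ c w) ∧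
    ∀ i : ℕ, 1 ≤ i → i ≤ 4 →
      (¬ wordInv (uWord b₂ c w i) <:+: z4 b₁ b₂ c w) ∧
      (∃ z'' : List (Letter n),
        z4 b₁ b₂ c w = preZ b₁ b₂ c w i ++ uWord b₂ c w i ++ z'') ∧
      (∀ z' z'' : List (Letter n),
        z4 b₁ b₂ c w = z' ++ uWord b₂ c w i ++ z'' → z' = preZ b₁ b₂ c w i) := by
  obtain ⟨-, hch⟩ := hred
  have hcb : b₂ ≠ c.inv := by
    intro h
    apply hc₂
    rw [h]
    exact (inv_inv c).symm
  have hA : List.Chain' (fun a b : Letter n => b ≠ a.inv) ([b₁] ++ w ++ [b₂]) :=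
    hch.infix ⟨[d₁], [b₁] ++ w ++ [b₂] ++ [d₂], by simp⟩
  have hb₁b₂ : b₁ ≠ b₂.inv := by
    have h := hch.infix (l₁ := [b₂, b₁]) ⟨[d₁, b₁] ++ w, w ++ [b₂, d₂], by simp⟩
    simpa [List.Chain', List.isChain_cons_cons] using h
  have hz4 : z4 b₁ b₂ c w = blocks ([b₁] ++ w) b₂ c
      [w.length + 1 + 1, w.length + 1 + 2, w.length + 1 + 3, w.length + 1 + 4] := by
    simp [z4, syl, blocks, List.append_assoc]
  constructor
  · refine ⟨by simp [z4, syl], ?_⟩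
    rw [hz4]
    exact blocks_chain b₁ b₂ c w hA hb₁b₂ hc₂ hcb _
  · intro i hi1 hi4
    have hL : w.length + 1 + 1 ≤ w.length + 1 + i := by omega
    refine ⟨?_, ?_, ?_⟩
    · rintro ⟨s, t, hst⟩
      rw [hz4] at hst
      have hst' : (s ++ [Letter.inv b₂]) ++
          (List.replicate (w.length + 1 + i) c.inv ++ (Letter.inv b₂ :: t)) =
          blocks ([b₁] ++ w) b₂ c
            [w.length + 1 + 1, w.length + 1 + 2, w.length + 1 + 3, w.length + 1 + 4] := by
        simpa [wordInv, uWord, List.append_assoc] using hst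
      exact no_run ([b₁] ++ w) b₂ c c.inv (w.length + 1) (by simp)
        (fun h => hcb (by rw [← h])) (Ne.symm (inv_ne c)) _ _ hL _ _ hst'
    · interval_cases i
      · exact ⟨syl b₁ b₂ c w 2 ++ syl b₁ b₂ c w 3 ++ syl b₁ b₂ c w 4,
          by simp [z4, preZ, uWord, syl, List.append_assoc]⟩
      · refine ⟨syl b₁ b₂ c w 3 ++ syl b₁ b₂ c w 4, ?_⟩
        have hr : List.range 1 = [0] := rfl
        simp [z4, preZ, uWord, syl, hr, List.append_assoc]
      · refine ⟨syl b₁ b₂ c w 4, ?_⟩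
        have hr : List.range 2 = [0, 1] := rfl
        simp [z4, preZ, uWord, syl, hr, List.append_assoc]
      · refine ⟨[], ?_⟩
        have hr : List.range 3 = [0, 1, 2] := rfl
        simp [z4, preZ, uWord, syl, hr, List.append_assoc]
    · intro z' z'' hEq
      rw [hz4] at hEq
      have hE' : z' ++ (b₂ :: (List.replicate (w.length + 1 + i) c ++ b₂ :: z'')) =
          blocks ([b₁] ++ w) b₂ c
            [w.length + 1 + 1, w.length + 1 + 2, w.length + 1 + 3, w.length + 1 + 4] := by
        simpa [uWord, List.append_assoc] using hEq.symm
      obtain ⟨pre, post, hks, hz', -⟩ :=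
        occ_unique ([b₁] ++ w) b₂ c (w.length + 1) (by simp) (by omega) hc₁ _
          (w.length + 1 + i) hL z' z'' hE'
      interval_cases i <;>
        rcases pre with _ | ⟨p1, _ | ⟨p2, _ | ⟨p3, _ | ⟨p4, pre⟩⟩⟩⟩ <;>
          simp [blocks] at hks hz' <;>
          first
          | omega
          | ((repeat rcases hks with ⟨rfl, hks⟩)
             rw [hz']
             have hr0 : List.range 0 = [] := rfl
             have hr1 : List.range 1 = [0] := rfl
             have hr2 : List.range 2 = [0, 1] := rfl
             have hr3 : List.range 3 = [0, 1, 2] := rfl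
             simp [blocks, preZ, syl, hr0, hr1, hr2, hr3, List.append_assoc])
end

section
/- Let n ≥ 2 and let A = {a₁, a₁⁻¹, …, aₙ, aₙ⁻¹} (so |A| = 2n ≥ 4). Let w be a nonempty reduced word over A, let b₁, b₂, d₁, d₂ ∈ A be letters such that the word d₁ (b₁ w b₂)² d₂ is reduced, let c ∈ A be a letter with c ∉ {b₂, b₂⁻¹}, and set n_w = |w| + 1. Define z₄(w) = b₁ w b₂ c^{n_w+1} b₂ · b₁ w b₂ c^{n_w+2} b₂ · b₁ w b₂ c^{n_w+3} b₂ · b₁ w b₂ c^{n_w+4} b₂. Then the word d₁ z₄(w) d₂ is reduced. -/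
/-! Reducedness only constrains adjacent pairs of letters. Every adjacent pair of `d₁ z₄(w) d₂`
either occurs in `d₁ (b₁ w b₂)² d₂` (inside `b₁ w b₂`, or as `d₁ b₁`, `b₂ b₁`, `b₂ d₂`) or is one of
`b₂ c`, `c c`, `c b₂`; these do not cancel because `c ≠ b₂⁻¹` and no letter is its own inverse. -/

namespace Letter

variable {n : ℕ}

@[simp] lemma inv_inv (x : Letter n) : x.inv.inv = x := by
  simp [inv]

lemma ne_inv_self (x : Letter n) : x ≠ x.inv := by
  simp [inv, Prod.ext_iff]

lemma ne_inv_comm_s7 {x y : Letter n} : x ≠ y.inv ↔ y ≠ x.inv := by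
  constructor <;> rintro h rfl <;> simp at h

end Letter

section Syllable

variable {n : ℕ} (b₁ b₂ c : Letter n) (w : List (Letter n)) (i : ℕ)

lemma syl_eq_flatten :
    syl b₁ b₂ c w i = [[b₁] ++ w ++ [b₂], List.replicate (w.length + 1 + i) c, [b₂]].flatten := by
  simp [syl]

@[simp] lemma syl_ne_nil : syl b₁ b₂ c w i ≠ [] := by
  simp [syl]

@[simp] lemma head?_syl : (syl b₁ b₂ c w i).head? = some b₁ := by
  simp [syl]

@[simp] lemma getLast?_syl : (syl b₁ b₂ c w i).getLast? = some b₂ :=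
  List.getLast?_concat

variable {b₁ b₂ c w} in
lemma isChain_syl (hcore : ([b₁] ++ w ++ [b₂]).IsChain fun a b => b ≠ a.inv)
    (hc : c ≠ b₂.inv) : (syl b₁ b₂ c w i).IsChain fun a b => b ≠ a.inv := by
  rw [syl_eq_flatten, List.isChain_flatten (by simp)]
  have hpower := List.isChain_replicate_of_rel (r := fun a b : Letter n => b ≠ a.inv)
    (w.length + 1 + i) (Letter.ne_inv_self c)
  refine ⟨by simpa using ⟨hcore, hpower⟩, ?_⟩
  obtain ⟨k, hk⟩ : ∃ k, w.length + 1 + i = k + 1 := ⟨w.length + i, by omega⟩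
  simp [-Prod.forall, List.getLast?_cons, List.getLast?_append, List.head?_replicate,
    List.getLast?_replicate, hk, hc, Letter.ne_inv_comm_s7.mp hc]

end Syllable

theorem d1_z4_d2_reduced_general
    (n : ℕ)
    (w : List (Letter n))
    (b₁ b₂ d₁ d₂ c : Letter n)
    (hred : ReducedWord ([d₁] ++ [b₁] ++ w ++ [b₂] ++ [b₁] ++ w ++ [b₂] ++ [d₂]))
    (hc₂ : c ≠ b₂.inv) :
    ReducedWord ([d₁] ++ z4 b₁ b₂ c w ++ [d₂]) := by
  set core := [b₁] ++ w ++ [b₂]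
  obtain ⟨hcore, hd₁b₁, hb₂b₁, hb₂d₂⟩ :
      (core.IsChain fun a b => b ≠ a.inv) ∧ b₁ ≠ d₁.inv ∧ b₁ ≠ b₂.inv ∧ d₂ ≠ b₂.inv := by
    have hsquare : [d₁] ++ [b₁] ++ w ++ [b₂] ++ [b₁] ++ w ++ [b₂] ++ [d₂] =
        [[d₁], core, core, [d₂]].flatten := by
      simp [core]
    have hchain := hred.2
    rw [hsquare] at hchain
    simpa [-Prod.forall, core, List.getLast?_cons, List.getLast?_append] using
      (List.isChain_flatten (by simp [core])).mp hchain
  have hsyllables : [d₁] ++ z4 b₁ b₂ c w ++ [d₂] =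
      [[d₁], syl b₁ b₂ c w 1, syl b₁ b₂ c w 2, syl b₁ b₂ c w 3, syl b₁ b₂ c w 4, [d₂]].flatten := by
    simp [z4]
  refine ⟨by simp, ?_⟩
  rw [hsyllables]
  refine (List.isChain_flatten (by simp)).mpr ⟨?_, ?_⟩
  · simp [isChain_syl _ hcore hc₂]
  · simp [-Prod.forall, hd₁b₁, hb₂b₁, hb₂d₂]

theorem d1_z4_d2_reduced
    (n : ℕ) (hn : 2 ≤ n)
    (w : List (Letter n)) (hw : ReducedWord w)
    (b₁ b₂ d₁ d₂ c : Letter n)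
    (hred : ReducedWord ([d₁] ++ [b₁] ++ w ++ [b₂] ++ [b₁] ++ w ++ [b₂] ++ [d₂]))
    (hc₁ : c ≠ b₂) (hc₂ : c ≠ b₂.inv) :
    ReducedWord ([d₁] ++ z4 b₁ b₂ c w ++ [d₂]) :=
  d1_z4_d2_reduced_general n w b₁ b₂ d₁ d₂ c hred hc₂
end
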